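/- Let n be a natural number with n ≡ 3 (mod 8). Let R₁ be the number of triples (a,b,c) of nonnegative integers with n = a² + b² + c², and let R₂ be the number of pairs (a,b) of nonnegative integers with n = a² + 2b². If 4 divides R₁ and 4 divides R₂, then n does not belong to B. -/

import Mathlib

open PowerSeries

/-- `g = ∑_{n ≥ 0} x^{n²}` in `(ℤ/2ℤ)[[x]]`: the coefficient of `x^m` is `1`
exactly when `m` is a perfect square. -/
noncomputable def g : PowerSeries (ZMod 2) :=
  PowerSeries.mk fun m => if IsSquare m then 1 else 0

/-- `B` is the set of `n` for which the coefficient of `x^n` in `1/g` equals `1`. -/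
noncomputable def B : Set ℕ := {n | PowerSeries.coeff (R := ZMod 2) n g⁻¹ = 1}

/-!
Over `𝔽₂` the Frobenius gives `g ^ 2 ^ k = g(x ^ 2 ^ k)`, and `g + g⁴ = ∑_{m odd} x^{m²}` only has
exponents `≡ 1 (mod 8)`. From `g * g⁻¹ = 1` one gets `g⁻¹ = g¹¹ + (g + g⁴)⁴ g³ g⁻⁸`, and the second
term has no exponent `≡ 3 (mod 8)` because `g³` has none `≡ 7`. So for `n ≡ 3 (mod 8)` the
coefficient of `xⁿ` in `g⁻¹` is that of `g¹¹ = g(x) g(x²) g(x⁸)`, the parity of the number `N` of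
solutions of `n = x² + 2y² + 8z²`. Splitting the solutions of `n = a² + b² + c²` according to
`a = b`, `a < b`, `a > b`, the substitution `(a, b) = (|y - 2z|, y + 2z)` gives
`R₁ = R₂ + 2 (N - R₂)`, so `2N = R₁ + R₂ ≡ 0 (mod 4)`.
-/

open Finset
open scoped Pointwise

theorem pow_prime_pow_eq_expand {p : ℕ} [Fact p.Prime] (k : ℕ) (f : (ZMod p)⟦X⟧) :
    f ^ p ^ k = expand (p ^ k) (pow_ne_zero k (Fact.out : p.Prime).ne_zero) f := by
  rw [← MvPowerSeries.map_iterateFrobenius_expand p (Fact.out : p.Prime).ne_zero]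
  have : iterateFrobenius (ZMod p) p k = RingHom.id _ := by
    ext x
    simp [iterateFrobenius_def, ZMod.pow_card_pow]
  rw [this, MvPowerSeries.map_id]
  rfl

theorem coeff_pow_prime_pow {p : ℕ} [Fact p.Prime] (k m : ℕ) (f : (ZMod p)⟦X⟧) :
    coeff m (f ^ p ^ k) = if p ^ k ∣ m then coeff (m / p ^ k) f else 0 := by
  rw [pow_prime_pow_eq_expand, coeff_expand]

theorem coeff_sum_X_pow {R ι : Type*} [Semiring R] (s : Finset ι) (e : ι → ℕ) (m : ℕ) :
    coeff m (∑ i ∈ s, (X : R⟦X⟧) ^ e i) = #{i ∈ s | m = e i} := by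
  simp [coeff_X_pow]

theorem eq_pow_eleven_add_of_mul_eq_one {R : Type*} [CommRing R] (h2 : (2 : R) = 0) {u v : R}
    (huv : u * v = 1) : v = u ^ 11 + (u + u ^ 4) ^ 4 * u ^ 3 * v ^ 8 := by
  have frobenius : (u + u ^ 4) ^ 4 = u ^ 4 + u ^ 16 := by
    linear_combination (2 * u ^ 7 + 3 * u ^ 10 + 2 * u ^ 13) * h2
  rw [frobenius, show (u ^ 4 + u ^ 16) * u ^ 3 * v ^ 8 = (u * v) ^ 7 * v + u ^ 11 * (u * v) ^ 8
    by ring, huv]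
  linear_combination -u ^ 11 * h2

def SupportedMod {R : Type*} [Semiring R] (q : ℕ) (f : R⟦X⟧) (S : Finset (ZMod q)) : Prop :=
  ∀ m, coeff m f ≠ 0 → (m : ZMod q) ∈ S

namespace SupportedMod

variable {R : Type*} [Semiring R] {q : ℕ} {f h : R⟦X⟧} {S T : Finset (ZMod q)}

theorem mul (hf : SupportedMod q f S) (hh : SupportedMod q h T) :
    SupportedMod q (f * h) (S + T) := by
  intro m hm
  rw [coeff_mul] at hm
  obtain ⟨⟨i, j⟩, hij, hne⟩ := exists_ne_zero_of_sum_ne_zero hm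
  rw [HasAntidiagonal.mem_antidiagonal] at hij
  rw [← hij, Nat.cast_add]
  exact add_mem_add (hf i (left_ne_zero_of_mul hne)) (hh j (right_ne_zero_of_mul hne))

theorem one : SupportedMod q (1 : R⟦X⟧) 0 := by
  intro m hm
  rw [coeff_one] at hm
  rw [mem_zero, show m = 0 by by_contra h; exact hm (if_neg h)]
  exact Nat.cast_zero

theorem pow (hf : SupportedMod q f S) (k : ℕ) : SupportedMod q (f ^ k) (k • S) := by
  induction k with
  | zero => simpa using one
  | succ k ih => simpa [pow_succ, succ_nsmul] using ih.mul hf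

theorem coeff_eq_zero (hf : SupportedMod q f S) {m : ℕ} (hm : (m : ZMod q) ∉ S) :
    coeff m f = 0 :=
  not_not.mp (mt (hf m) hm)

end SupportedMod

theorem coeff_g (m : ℕ) : coeff m g = if IsSquare m then 1 else 0 := coeff_mk _ _

theorem constantCoeff_g : constantCoeff g = 1 := by
  rw [← coeff_zero_eq_constantCoeff_apply, coeff_g, if_pos IsSquare.zero]

theorem supportedMod_g : SupportedMod 8 g {0, 1, 4} := by
  intro m hm
  rw [coeff_g, ne_eq, ite_eq_right_iff, not_forall] at hm
  obtain ⟨⟨r, rfl⟩, -⟩ := hm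
  have : ∀ a : ZMod 8, a * a ∈ ({0, 1, 4} : Finset (ZMod 8)) := by decide
  simpa using this r

theorem isSquare_iff_of_even {m : ℕ} (hm : Even m) : IsSquare m ↔ 4 ∣ m ∧ IsSquare (m / 4) := by
  constructor
  · rintro ⟨r, rfl⟩
    obtain ⟨s, rfl⟩ : Even r := by simpa [Nat.even_mul] using hm
    exact ⟨⟨s * s, by ring⟩, s, by rw [show (s + s) * (s + s) = 4 * (s * s) by ring]; omega⟩
  · rintro ⟨⟨k, rfl⟩, s, hs⟩
    exact ⟨2 * s, by rw [Nat.mul_div_cancel_left k (by norm_num)] at hs; rw [hs]; ring⟩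

theorem supportedMod_g_add_g_pow_four : SupportedMod 8 (g + g ^ 4) {1} := by
  intro m hm
  rw [map_add, show 4 = 2 ^ 2 from rfl, coeff_pow_prime_pow, coeff_g, coeff_g] at hm
  simp only [Nat.reducePow] at hm
  rcases Nat.even_or_odd m with hev | ⟨s, rfl⟩
  · refine absurd ?_ hm
    by_cases h4 : 4 ∣ m <;> by_cases hsq : IsSquare (m / 4) <;>
      simp [isSquare_iff_of_even hev, h4, hsq, CharTwo.add_self_eq_zero]
  · have h4 : ¬ 4 ∣ 2 * s + 1 := by omega
    rw [if_neg h4, add_zero, ne_eq, ite_eq_right_iff, not_forall] at hm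
    obtain ⟨⟨r, hr⟩, -⟩ := hm
    obtain ⟨t, rfl⟩ : Odd r := by
      have : Odd (r * r) := hr ▸ odd_two_mul_add_one s
      exact (Nat.odd_mul.mp this).1
    have : ∀ a : ZMod 8, (2 * a + 1) * (2 * a + 1) = 1 := by decide
    simp [hr, this]

theorem supportedMod_pow_eight (f : (ZMod 2)⟦X⟧) : SupportedMod 8 (f ^ 8) {0} := by
  intro m hm
  rw [show 8 = 2 ^ 3 from rfl, coeff_pow_prime_pow] at hm
  split_ifs at hm with h
  · simpa using (ZMod.natCast_eq_zero_iff m 8).mpr h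
  · exact absurd rfl hm

theorem coeff_inv_g_eq_coeff_g_pow_eleven {n : ℕ} (hn : n % 8 = 3) :
    coeff n g⁻¹ = coeff n (g ^ 11) := by
  have two_eq_zero : (2 : (ZMod 2)⟦X⟧) = 0 := by
    rw [← map_ofNat C 2, show (OfNat.ofNat 2 : ZMod 2) = 0 from rfl, map_zero]
  have hinv := eq_pow_eleven_add_of_mul_eq_one two_eq_zero
    (PowerSeries.mul_inv_cancel g (by simp [constantCoeff_g]))
  have hrest := ((supportedMod_g_add_g_pow_four.pow 4).mul (supportedMod_g.pow 3)).mul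
    (supportedMod_pow_eight g⁻¹)
  have hn' : (n : ZMod 8) = 3 := by rw [← ZMod.natCast_mod, hn]; rfl
  rw [congrArg (coeff n) hinv, map_add, hrest.coeff_eq_zero (by rw [hn']; decide), add_zero]

theorem X_pow_dvd_g_sub_sum_sq (N : ℕ) : X ^ N ∣ g - ∑ x ∈ range N, X ^ (x ^ 2) := by
  rw [X_pow_dvd_iff]
  intro m hm
  rw [map_sub, coeff_g, coeff_sum_X_pow, sub_eq_zero]
  split_ifs with hsq
  · obtain ⟨r, rfl⟩ := hsq
    rw [show {x ∈ range N | r * r = x ^ 2} = {r} by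
      ext x
      simp only [mem_filter, mem_range, mem_singleton, ← sq]
      constructor
      · rintro ⟨-, h⟩; exact (Nat.pow_left_injective two_ne_zero h).symm
      · rintro rfl; exact ⟨by nlinarith, rfl⟩]
    simp
  · rw [filter_false_of_mem fun x _ h => hsq ⟨x, h.trans (sq x)⟩]
    simp

def ternaryReps (a b c n : ℕ) : Finset (ℕ × ℕ × ℕ) :=
  {t ∈ range (n + 1) ×ˢ range (n + 1) ×ˢ range (n + 1) |
    n = a * t.1 ^ 2 + b * t.2.1 ^ 2 + c * t.2.2 ^ 2}

theorem le_mul_sq {a : ℕ} (ha : a ≠ 0) (x : ℕ) : x ≤ a * x ^ 2 := by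
  calc x ≤ x ^ 2 := Nat.le_self_pow two_ne_zero x
    _ ≤ a * x ^ 2 := Nat.le_mul_of_pos_left _ (Nat.pos_of_ne_zero ha)

theorem mem_ternaryReps {a b c n : ℕ} (ha : a ≠ 0) (hb : b ≠ 0) (hc : c ≠ 0)
    {t : ℕ × ℕ × ℕ} :
    t ∈ ternaryReps a b c n ↔ n = a * t.1 ^ 2 + b * t.2.1 ^ 2 + c * t.2.2 ^ 2 := by
  simp only [ternaryReps, mem_filter, mem_product, mem_range, and_iff_right_iff_imp]
  have := le_mul_sq ha t.1
  have := le_mul_sq hb t.2.1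
  have := le_mul_sq hc t.2.2
  omega

theorem mem_ternaryReps_one_one_one {n : ℕ} {t : ℕ × ℕ × ℕ} :
    t ∈ ternaryReps 1 1 1 n ↔ n = t.1 ^ 2 + t.2.1 ^ 2 + t.2.2 ^ 2 := by
  simpa only [one_mul] using mem_ternaryReps one_ne_zero one_ne_zero one_ne_zero

theorem mem_ternaryReps_one_two_eight {n : ℕ} {t : ℕ × ℕ × ℕ} :
    t ∈ ternaryReps 1 2 8 n ↔ n = t.1 ^ 2 + 2 * t.2.1 ^ 2 + 8 * t.2.2 ^ 2 := by
  simpa only [one_mul] using mem_ternaryReps one_ne_zero two_ne_zero (by norm_num)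

theorem card_sum_three_sq (n : ℕ) :
    Nat.card {t : ℕ × ℕ × ℕ // n = t.1 ^ 2 + t.2.1 ^ 2 + t.2.2 ^ 2} =
      #(ternaryReps 1 1 1 n) := by
  rw [← Nat.card_eq_finsetCard]
  exact Nat.card_congr (Equiv.subtypeEquivRight fun _ => mem_ternaryReps_one_one_one.symm)

theorem card_sq_add_two_sq (n : ℕ) :
    Nat.card {p : ℕ × ℕ // n = p.1 ^ 2 + 2 * p.2 ^ 2} =
      #{t ∈ ternaryReps 1 2 8 n | t.2.2 = 0} := by
  rw [← Nat.card_eq_finsetCard]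
  refine Nat.card_congr
    { toFun := fun p => ⟨(p.1.1, p.1.2, 0), by simp [mem_ternaryReps_one_two_eight, p.2]⟩
      invFun := fun t => ⟨(t.1.1, t.1.2.1), ?_⟩
      left_inv := fun _ => rfl
      right_inv := fun t => ?_ }
  · obtain ⟨h, h0⟩ := mem_filter.mp t.2
    simpa [mem_ternaryReps_one_two_eight, h0] using h
  · obtain ⟨⟨x, y, k⟩, ht⟩ := t
    obtain ⟨-, rfl⟩ := mem_filter.mp ht
    rfl

theorem sq_mod_eight (x : ℕ) : x % 2 = 1 ∧ x ^ 2 % 8 = 1 ∨ x % 2 = 0 ∧ x ^ 2 % 4 = 0 := by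
  have h := Nat.pow_mod x 2 8
  have : x % 8 < 8 := Nat.mod_lt _ (by norm_num)
  interval_cases hx : x % 8 <;> omega

theorem odd_of_eq_sq_add_sq_add_sq {n a b c : ℕ} (hn : n % 8 = 3)
    (h : n = a ^ 2 + b ^ 2 + c ^ 2) : a % 2 = 1 ∧ b % 2 = 1 ∧ c % 2 = 1 := by
  rcases sq_mod_eight a with ha | ha <;> rcases sq_mod_eight b with hb | hb <;>
    rcases sq_mod_eight c with hc | hc <;> omega

theorem odd_of_eq_sq_add_two_sq_add_eight_sq {n x y k : ℕ} (hn : n % 8 = 3)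
    (h : n = x ^ 2 + 2 * y ^ 2 + 8 * k ^ 2) : x % 2 = 1 ∧ y % 2 = 1 := by
  rcases sq_mod_eight x with hx | hx <;> rcases sq_mod_eight y with hy | hy <;> omega

theorem natAbs_sub_sq_add_add_sq (y z : ℕ) :
    ((y : ℤ) - z).natAbs ^ 2 + (y + z) ^ 2 = 2 * (y ^ 2 + z ^ 2) := by
  zify
  rw [sq_abs]
  ring

theorem card_eq_card_filter_eq_add_card_filter_lt_add_card_filter_gt {α β : Type*}
    [LinearOrder β] (s : Finset α) (f g : α → β) :
    #s = #{x ∈ s | f x = g x} + #{x ∈ s | f x < g x} + #{x ∈ s | g x < f x} := by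
  rw [card_eq_sum_ones, Finset.card_filter, Finset.card_filter, Finset.card_filter,
    ← sum_add_distrib, ← sum_add_distrib]
  refine sum_congr rfl fun x _ => ?_
  rcases lt_trichotomy (f x) (g x) with h | h | h
  · simp [h, h.ne, h.not_gt]
  · simp [h]
  · simp [h, h.ne', h.not_gt]

theorem ternaryReps_card_filter_fst_eq_snd (n : ℕ) :
    #{t ∈ ternaryReps 1 1 1 n | t.1 = t.2.1} = #{t ∈ ternaryReps 1 2 8 n | t.2.2 = 0} := by
  refine card_nbij' (fun t => (t.2.2, t.1, 0)) (fun t => (t.2.1, t.2.1, t.1)) ?_ ?_ ?_ ?_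
  · rintro ⟨a, b, c⟩ ht
    simp only [mem_coe, mem_filter, mem_ternaryReps_one_one_one] at ht
    simp only [mem_coe, mem_filter, mem_ternaryReps_one_two_eight]
    obtain ⟨h, rfl⟩ := ht
    exact ⟨by linarith, trivial⟩
  · rintro ⟨x, y, k⟩ ht
    simp only [mem_coe, mem_filter, mem_ternaryReps_one_two_eight] at ht
    simp only [mem_coe, mem_filter, mem_ternaryReps_one_one_one]
    obtain ⟨h, rfl⟩ := ht
    exact ⟨by linarith, trivial⟩
  · rintro ⟨a, b, c⟩ ht
    simp only [mem_coe, mem_filter] at ht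
    simp [ht.2]
  · rintro ⟨x, y, k⟩ ht
    simp only [mem_coe, mem_filter] at ht
    simp [ht.2]

theorem ternaryReps_card_filter_snd_lt_fst (n : ℕ) :
    #{t ∈ ternaryReps 1 1 1 n | t.2.1 < t.1} = #{t ∈ ternaryReps 1 1 1 n | t.1 < t.2.1} := by
  refine card_nbij' (fun t => (t.2.1, t.1, t.2.2)) (fun t => (t.2.1, t.1, t.2.2)) ?_ ?_
    (fun _ _ => rfl) (fun _ _ => rfl) <;>
  · rintro ⟨a, b, c⟩ ht
    simp only [mem_coe, mem_filter, mem_ternaryReps_one_one_one] at ht ⊢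
    exact ⟨by linarith, ht.2⟩

theorem ternaryReps_card_filter_fst_lt_snd {n : ℕ} (hn : n % 8 = 3) :
    #{t ∈ ternaryReps 1 1 1 n | t.1 < t.2.1} = #{t ∈ ternaryReps 1 2 8 n | t.2.2 ≠ 0} := by
  symm
  refine card_nbij (fun t => (((t.2.1 : ℤ) - (2 * t.2.2 : ℕ)).natAbs, t.2.1 + 2 * t.2.2, t.1))
    ?_ ?_ ?_
  · rintro ⟨x, y, k⟩ ht
    simp only [mem_coe, mem_filter, mem_ternaryReps_one_two_eight] at ht
    simp only [mem_coe, mem_filter, mem_ternaryReps_one_one_one]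
    have hsq := natAbs_sub_sq_add_add_sq y (2 * k)
    have hy := (odd_of_eq_sq_add_two_sq_add_eight_sq hn ht.1).2
    refine ⟨by linarith, by omega⟩
  · rintro ⟨x, y, k⟩ ht ⟨x', y', k'⟩ ht' he
    simp only [mem_coe, mem_filter, mem_ternaryReps_one_two_eight] at ht ht'
    have hy := (odd_of_eq_sq_add_two_sq_add_eight_sq hn ht.1).2
    have hy' := (odd_of_eq_sq_add_two_sq_add_eight_sq hn ht'.1).2
    simp only [Prod.mk.injEq] at he ⊢
    omega
  · rintro ⟨a, b, c⟩ ht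
    simp only [mem_coe, mem_filter, mem_ternaryReps_one_one_one] at ht
    obtain ⟨ha, hb, -⟩ := odd_of_eq_sq_add_sq_add_sq hn ht.1
    -- `y` must be odd, so it is whichever of `(a + b) / 2` and `(b - a) / 2` is odd.
    obtain ⟨y, k, hk, hyk⟩ : ∃ y k : ℕ,
        k ≠ 0 ∧ ((y : ℤ) - (2 * k : ℕ)).natAbs = a ∧ y + 2 * k = b := by
      by_cases h4 : 4 ∣ b - a
      · exact ⟨(a + b) / 2, (b - a) / 4, by omega, by omega, by omega⟩
      · exact ⟨(b - a) / 2, (a + b) / 4, by omega, by omega, by omega⟩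
    refine ⟨(c, y, k), ?_, Prod.ext hyk.1 (Prod.ext hyk.2 rfl)⟩
    have hsq := natAbs_sub_sq_add_add_sq y (2 * k)
    rw [hyk.1, hyk.2] at hsq
    simp only [mem_coe, mem_filter, mem_ternaryReps_one_two_eight]
    exact ⟨by linarith, hk⟩

theorem two_mul_card_ternaryReps {n : ℕ} (hn : n % 8 = 3) :
    2 * #(ternaryReps 1 2 8 n) =
      #(ternaryReps 1 1 1 n) + #{t ∈ ternaryReps 1 2 8 n | t.2.2 = 0} := by
  have hT := card_eq_card_filter_eq_add_card_filter_lt_add_card_filter_gt (ternaryReps 1 1 1 n)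
    (·.1) (·.2.1)
  have hN := card_filter_add_card_filter_not (s := ternaryReps 1 2 8 n) (fun t => t.2.2 = 0)
  rw [ternaryReps_card_filter_fst_eq_snd, ternaryReps_card_filter_snd_lt_fst,
    ternaryReps_card_filter_fst_lt_snd hn] at hT
  simp only [← ne_eq] at hN
  omega

theorem coeff_g_pow_eleven (n : ℕ) : coeff n (g ^ 11) = (#(ternaryReps 1 2 8 n) : ZMod 2) := by
  set P : (ZMod 2)⟦X⟧ := ∑ x ∈ range (n + 1), X ^ (x ^ 2)
  have htrunc : coeff n (g ^ 11) = coeff n (P ^ 11) := by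
    have h := (X_pow_dvd_g_sub_sum_sq (n + 1)).trans (sub_dvd_pow_sub_pow g P 11)
    rw [X_pow_dvd_iff] at h
    exact sub_eq_zero.mp (by simpa using h n (lt_add_one n))
  have hP : P ^ 11 = ∑ t ∈ range (n + 1) ×ˢ range (n + 1) ×ˢ range (n + 1),
      (X : (ZMod 2)⟦X⟧) ^ (t.1 ^ 2 + 2 * t.2.1 ^ 2 + 8 * t.2.2 ^ 2) := by
    rw [show P ^ 11 = P * P ^ 2 ^ 1 * P ^ 2 ^ 3 by ring, pow_prime_pow_eq_expand,
      pow_prime_pow_eq_expand]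
    simp only [P, map_sum, map_pow, expand_X, ← pow_mul, sum_mul, mul_sum, ← pow_add,
      sum_product_right]
    norm_num
  rw [htrunc, hP, coeff_sum_X_pow, ternaryReps]
  simp only [one_mul]

theorem stmt4 (n : ℕ) (hn : n % 8 = 3)
    (R₁ R₂ : ℕ)
    (hR₁ : R₁ = Nat.card {t : ℕ × ℕ × ℕ // n = t.1 ^ 2 + t.2.1 ^ 2 + t.2.2 ^ 2})
    (hR₂ : R₂ = Nat.card {p : ℕ × ℕ // n = p.1 ^ 2 + 2 * p.2 ^ 2})
    (h₁ : 4 ∣ R₁) (h₂ : 4 ∣ R₂) :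
    n ∉ B := by
  have hcount := two_mul_card_ternaryReps hn
  rw [← card_sum_three_sq, ← card_sq_add_two_sq, ← hR₁, ← hR₂] at hcount
  have hcoeff : coeff n g⁻¹ = 0 := by
    rw [coeff_inv_g_eq_coeff_g_pow_eleven hn, coeff_g_pow_eleven, ZMod.natCast_eq_zero_iff]
    omega
  simp [B, hcoeff]
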